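/- arXiv:1005.0921 — 3 statements merged into one kernel-verified Lean document; each statement's English description precedes it below -/
import Mathlib

section
/- Let (K, d_K) be a compact metric space equipped with a binary operation • : K × K → K that commutes with limits (if ρ_i → ρ and σ_i → σ in K then ρ_i • σ_i → ρ • σ). Suppose f, g ∈ K and e ∈ K satisfy f • g = e and e • x = x • e = x for all x in the closure of the sub-semigroup generated by f and g, and suppose • is associative on that closure. Then there exists a strictly increasing sequence of positive integers (i_r) such that the sequence (f^{i_{r+1} - i_r}) of positive powers of f converges to e. -/
/-!
Since `f • g = e` and `e` is an identity, associativity telescopes `f^n • g^n` down to `e`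
for every `n`. Choose a common subsequence `(χ r)` along which `f^(χ r) → F` and
`g^(χ r) → G`; continuity of `•` gives `F • G = e`. For `m < n`,
`f^n • g^m = f^(n-m) • (f^m • g^m) = f^(n-m)`, so
`f^(χ (r+1) - χ r) = f^(χ (r+1)) • g^(χ r) → F • G = e`.
-/

open Filter Topology

/-- `opPow op f n` is the `(n+1)`-fold `op`-product of `f` with itself,
i.e. `f^(n+1)`; so `opPow op f 0 = f` and `opPow op f (n+1) = op f (f^(n+1))`. -/
def opPow {K : Type*} (op : K → K → K) (f : K) : ℕ → K
  | 0 => f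
  | n + 1 => op f (opPow op f n)

def semigroupGen {K : Type*} (op : K → K → K) (f g : K) : Set K :=
  ⋂₀ {S : Set K | f ∈ S ∧ g ∈ S ∧ ∀ a ∈ S, ∀ b ∈ S, op a b ∈ S}

theorem SeqCompactSpace.exists_tendsto_subseq_pair {X : Type*} [TopologicalSpace X]
    [SeqCompactSpace X] (u v : ℕ → X) :
    ∃ (a b : X) (φ : ℕ → ℕ), StrictMono φ ∧
      Tendsto (u ∘ φ) atTop (𝓝 a) ∧ Tendsto (v ∘ φ) atTop (𝓝 b) := by
  obtain ⟨a, φ, hφ, ha⟩ := SeqCompactSpace.tendsto_subseq u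
  obtain ⟨b, ψ, hψ, hb⟩ := SeqCompactSpace.tendsto_subseq (v ∘ φ)
  exact ⟨a, b, φ ∘ ψ, hφ.comp hψ, ha.comp hψ.tendsto_atTop, hb⟩

section semigroupGen

variable {K : Type*} {op : K → K → K} {f g : K}

theorem left_mem_semigroupGen : f ∈ semigroupGen op f g := fun _ hS => hS.1

theorem right_mem_semigroupGen : g ∈ semigroupGen op f g := fun _ hS => hS.2.1

theorem op_mem_semigroupGen {a b : K} (ha : a ∈ semigroupGen op f g)
    (hb : b ∈ semigroupGen op f g) : op a b ∈ semigroupGen op f g :=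
  fun S hS => hS.2.2 a (ha S hS) b (hb S hS)

end semigroupGen

section opPow

variable {K : Type*} {op : K → K → K} {S : Set K}
  (hS : ∀ a ∈ S, ∀ b ∈ S, op a b ∈ S)
  (hassoc : ∀ a ∈ S, ∀ b ∈ S, ∀ c ∈ S, op (op a b) c = op a (op b c))
include hS

theorem opPow_mem {f : K} (hf : f ∈ S) (n : ℕ) : opPow op f n ∈ S := by
  induction n with
  | zero => exact hf
  | succ n ih => exact hS f hf _ ih

include hassoc

theorem opPow_add {f : K} (hf : f ∈ S) (a b : ℕ) :
    opPow op f (a + b + 1) = op (opPow op f a) (opPow op f b) := by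
  induction a with
  | zero => rw [Nat.zero_add]; rfl
  | succ a ih =>
    rw [Nat.add_right_comm a 1 b]
    change op f (opPow op f (a + b + 1)) = _
    rw [ih, ← hassoc f hf _ (opPow_mem hS hf a) _ (opPow_mem hS hf b)]
    rfl

theorem op_opPow_opPow_eq {f g e : K} (hf : f ∈ S) (hg : g ∈ S) (hfg : op f g = e)
    (heg : op e g = g) (n : ℕ) : op (opPow op f n) (opPow op g n) = e := by
  induction n with
  | zero => exact hfg
  | succ n ih =>
    have hg' : opPow op g (n + 1) = op (opPow op g n) g := opPow_add hS hassoc hg n 0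
    change op (op f (opPow op f n)) _ = e
    rw [hg', hassoc f hf _ (opPow_mem hS hf n) _ (hS _ (opPow_mem hS hg n) g hg),
      ← hassoc _ (opPow_mem hS hf n) _ (opPow_mem hS hg n) g hg, ih, heg, hfg]

theorem opPow_sub_sub_one_eq {f g e : K} (hf : f ∈ S) (hg : g ∈ S) (hfg : op f g = e)
    (heg : op e g = g) (he : ∀ x ∈ S, op x e = x) {m n : ℕ} (hmn : m < n) :
    opPow op f (n - m - 1) = op (opPow op f n) (opPow op g m) := by
  obtain ⟨k, rfl⟩ : ∃ k, n = k + m + 1 := ⟨n - m - 1, by omega⟩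
  rw [opPow_add hS hassoc hf, hassoc _ (opPow_mem hS hf k) _ (opPow_mem hS hf m) _
    (opPow_mem hS hg m), op_opPow_opPow_eq hS hassoc hf hg hfg heg,
    he _ (opPow_mem hS hf k)]
  congr 1
  omega

end opPow

/-- in a compact metric space `K` with a binary operation `•`
commuting with limits, if `f • g = e`, `e` is a two-sided identity on the
closure of the sub-semigroup generated by `f` and `g`, and `•` is associative
on that closure, then there is a strictly increasing sequence `(i_r)` of
positive integers with `f^(i_{r+1} - i_r) → e`. -/
theorem statement2 {K : Type*} [MetricSpace K] [CompactSpace K]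
    (op : K → K → K)
    (hlim : ∀ (ρ σ : ℕ → K) (ρ₀ σ₀ : K), Tendsto ρ atTop (𝓝 ρ₀) →
      Tendsto σ atTop (𝓝 σ₀) →
      Tendsto (fun i => op (ρ i) (σ i)) atTop (𝓝 (op ρ₀ σ₀)))
    (f g e : K) (hfg : op f g = e)
    (hid : ∀ x ∈ closure (semigroupGen op f g), op e x = x ∧ op x e = x)
    (hassoc : ∀ a ∈ closure (semigroupGen op f g), ∀ b ∈ closure (semigroupGen op f g),
      ∀ c ∈ closure (semigroupGen op f g), op (op a b) c = op a (op b c)) :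
    ∃ i : ℕ → ℕ, StrictMono i ∧ (∀ r, 0 < i r) ∧
      Tendsto (fun r => opPow op f (i (r + 1) - i r - 1)) atTop (𝓝 e) := by
  have hS : ∀ a ∈ semigroupGen op f g, ∀ b ∈ semigroupGen op f g,
      op a b ∈ semigroupGen op f g := fun _ ha _ hb => op_mem_semigroupGen ha hb
  have hSassoc : ∀ a ∈ semigroupGen op f g, ∀ b ∈ semigroupGen op f g,
      ∀ c ∈ semigroupGen op f g, op (op a b) c = op a (op b c) := fun a ha b hb c hc =>
    hassoc a (subset_closure ha) b (subset_closure hb) c (subset_closure hc)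
  have hf : f ∈ semigroupGen op f g := left_mem_semigroupGen
  have hg : g ∈ semigroupGen op f g := right_mem_semigroupGen
  have heg := (hid g (subset_closure hg)).1
  obtain ⟨F, G, χ, hχ, hF, hG⟩ :=
    SeqCompactSpace.exists_tendsto_subseq_pair (opPow op f) (opPow op g)
  have hFG : op F G = e := by
    refine tendsto_nhds_unique (hlim _ _ _ _ hF hG) ?_
    simp only [Function.comp_apply, op_opPow_opPow_eq hS hSassoc hf hg hfg heg,
      tendsto_const_nhds]
  refine ⟨fun r => χ r + 1, fun a b hab => Nat.succ_lt_succ (hχ hab), fun r => (χ r).succ_pos, ?_⟩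
  have hlimit := hlim _ _ _ _ (hF.comp (tendsto_add_atTop_nat 1)) hG
  rw [hFG] at hlimit
  refine hlimit.congr fun r => ?_
  rw [Nat.add_sub_add_right, opPow_sub_sub_one_eq hS hSassoc hf hg hfg heg
    (fun x hx => (hid x (subset_closure hx)).2) (hχ r.lt_succ_self)]
  rfl
end

section
/- Let X = ℝⁿ with n ≥ 1, let H be the group of homeomorphisms of X onto itself, and let d_H be any metric on H such that convergence of a sequence (h_i) to the identity in (H, d_H) implies pointwise convergence of (h_i) to the identity. Then there is no compact metric space (K, d_K) with an operation • : K × K → K such that: (1) K ⊇ H; (2) d_K restricted to H equals d_H; (3) f • g = f ∘ g for all f, g ∈ H; (4) whenever (ρ_i) and (σ_i) converge in K, the sequence (ρ_i • σ_i) converges and lim(ρ_i • σ_i) = (lim ρ_i) • (lim σ_i). -/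
open Filter Topology Function

/-!
Suppose such a `K` existed. By compactness, for any homeomorphism `g` the sequences `g ^ i`
and `g⁻¹ ^ i` converge in `K` along a common subsequence `ψ`, to `ρ₀` and `σ₀` say. Continuity of
`•` gives `ρ₀ • σ₀ = lim g ^ ψ r * g⁻¹ ^ ψ r = id`, and also
`ρ₀ • σ₀ = lim g ^ ψ (r + 1) * g⁻¹ ^ ψ r = lim g ^ (ψ (r + 1) - ψ r)`. So positive powers of `g`
converge to the identity in `d_H`, hence pointwise. This fails for the contraction `x ↦ x / 2`.
-/

section SeqCompactEnvelope

variable {G K : Type*} [Group G] [TopologicalSpace K] [T2Space K] [CompactSpace K]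
  [FirstCountableTopology K]

theorem exists_strictMono_tendsto_pow_sub (φ : G → K) (op : K → K → K)
    (hop : ∀ a b, op (φ a) (φ b) = φ (a * b)) (hcont : SeqContinuous (uncurry op)) (g : G) :
    ∃ ψ : ℕ → ℕ, StrictMono ψ ∧
      Tendsto (fun r => φ (g ^ (ψ (r + 1) - ψ r))) atTop (𝓝 (φ 1)) := by
  obtain ⟨⟨ρ₀, σ₀⟩, ψ, hψ, hconv⟩ :=
    SeqCompactSpace.tendsto_subseq fun i => (φ (g ^ i), φ (g ^ i)⁻¹)
  have hρ : Tendsto (fun r => φ (g ^ ψ r)) atTop (𝓝 ρ₀) := (continuous_fst.tendsto _).comp hconv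
  have hσ : Tendsto (fun r => φ (g ^ ψ r)⁻¹) atTop (𝓝 σ₀) := (continuous_snd.tendsto _).comp hconv
  have hop_lim {ρ σ : ℕ → K} (hρ' : Tendsto ρ atTop (𝓝 ρ₀)) (hσ' : Tendsto σ atTop (𝓝 σ₀)) :
      Tendsto (fun r => op (ρ r) (σ r)) atTop (𝓝 (op ρ₀ σ₀)) :=
    hcont (hρ'.prodMk_nhds hσ')
  have hid : op ρ₀ σ₀ = φ 1 := by
    refine tendsto_nhds_unique (hop_lim hρ hσ) ?_
    simp only [hop, mul_inv_cancel, tendsto_const_nhds]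
  refine ⟨ψ, hψ, ?_⟩
  rw [← hid]
  convert hop_lim (hρ.comp (tendsto_add_atTop_nat 1)) hσ using 2 with r
  rw [comp_apply, hop, pow_sub g (hψ r.lt_succ_self).le]

end SeqCompactEnvelope

theorem Homeomorph.smulOfNeZero_pow_apply {α G₀ : Type*} [TopologicalSpace α] [GroupWithZero G₀]
    [MulAction G₀ α] [ContinuousConstSMul G₀ α] {c : G₀} (hc : c ≠ 0) (m : ℕ) (x : α) :
    (Homeomorph.smulOfNeZero c hc ^ m) x = c ^ m • x := by
  induction m with
  | zero => simp
  | succ m ih => rw [pow_succ', Homeomorph.mul_apply, ih, pow_succ', mul_smul,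
      Homeomorph.smulOfNeZero_apply]

section Contraction

variable {𝕜 E : Type*} [NormedField 𝕜] [NormedAddCommGroup E] [NormedSpace 𝕜 E]

theorem sub_norm_mul_norm_le_dist_pow_smul {c : 𝕜} (hc : ‖c‖ ≤ 1) {m : ℕ} (hm : 1 ≤ m) (x : E) :
    (1 - ‖c‖) * ‖x‖ ≤ dist (c ^ m • x) x :=
  calc (1 - ‖c‖) * ‖x‖ ≤ ‖x‖ - ‖c‖ ^ m * ‖x‖ := by
        have : ‖c‖ ^ m ≤ ‖c‖ := by simpa using pow_le_pow_of_le_one (norm_nonneg c) hc hm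
        nlinarith [norm_nonneg x]
    _ = ‖x‖ - ‖c ^ m • x‖ := by rw [norm_smul, norm_pow]
    _ ≤ dist (c ^ m • x) x := by rw [dist_comm, dist_eq_norm]; exact norm_sub_norm_le _ _

theorem not_tendsto_pow_smul_self {c : 𝕜} (hc : ‖c‖ < 1) {x : E} (hx : x ≠ 0) {m : ℕ → ℕ}
    (hm : ∀ r, 1 ≤ m r) : ¬Tendsto (fun r => c ^ m r • x) atTop (𝓝 x) := by
  intro hlim
  have hpos : 0 < (1 - ‖c‖) * ‖x‖ := mul_pos (sub_pos.2 hc) (norm_pos_iff.2 hx)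
  obtain ⟨N, hN⟩ := Metric.tendsto_atTop.1 hlim _ hpos
  exact (sub_norm_mul_norm_le_dist_pow_smul hc.le (hm N) x).not_gt (hN N le_rfl)

end Contraction

theorem statement6_general {n : ℕ} (hn : 1 ≤ n)
    (dH : (EuclideanSpace ℝ (Fin n) ≃ₜ EuclideanSpace ℝ (Fin n)) →
          (EuclideanSpace ℝ (Fin n) ≃ₜ EuclideanSpace ℝ (Fin n)) → ℝ)
    (hdH : ∀ h : ℕ → (EuclideanSpace ℝ (Fin n) ≃ₜ EuclideanSpace ℝ (Fin n)),
      Tendsto (fun i => dH (h i) (Homeomorph.refl (EuclideanSpace ℝ (Fin n))))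
        atTop (𝓝 0) →
      ∀ x : EuclideanSpace ℝ (Fin n), Tendsto (fun i => h i x) atTop (𝓝 x))
    (K : Type*) [MetricSpace K] [CompactSpace K]
    (φ : (EuclideanSpace ℝ (Fin n) ≃ₜ EuclideanSpace ℝ (Fin n)) → K)
    (hext : ∀ f g, dist (φ f) (φ g) = dH f g)
    (op : K → K → K)
    (hop : ∀ f g, op (φ f) (φ g) = φ (g.trans f))
    (hlim : ∀ (ρ σ : ℕ → K) (ρ₀ σ₀ : K), Tendsto ρ atTop (𝓝 ρ₀) →
      Tendsto σ atTop (𝓝 σ₀) →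
      Tendsto (fun i => op (ρ i) (σ i)) atTop (𝓝 (op ρ₀ σ₀))) :
    False := by
  have hcont : SeqContinuous (uncurry op) := fun _ _ hx =>
    hlim _ _ _ _ ((continuous_fst.tendsto _).comp hx) ((continuous_snd.tendsto _).comp hx)
  have h2 : (2⁻¹ : ℝ) ≠ 0 := by norm_num
  obtain ⟨ψ, hψ, hconv⟩ := exists_strictMono_tendsto_pow_sub φ op hop hcont
    (Homeomorph.smulOfNeZero (2⁻¹ : ℝ) h2)
  have hdist := (tendsto_iff_dist_tendsto_zero.1 hconv).congr fun _ => hext _ _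
  have : Nonempty (Fin n) := ⟨⟨0, hn⟩⟩
  obtain ⟨x, hx⟩ := exists_ne (0 : EuclideanSpace ℝ (Fin n))
  refine not_tendsto_pow_smul_self (c := (2⁻¹ : ℝ)) (by norm_num) hx
    (fun r => Nat.sub_pos_of_lt (hψ r.lt_succ_self)) ?_
  simpa only [Homeomorph.smulOfNeZero_pow_apply] using hdH _ hdist x

/-- main theorem for `X = ℝⁿ`, `n ≥ 1`. Let `H` be the group of
self-homeomorphisms of `ℝⁿ` with a metric `d_H` such that `d_H`-convergence to
the identity implies pointwise convergence to the identity. Then there is no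
compact metric space `K` containing `H` (via an injection `φ`), whose metric
extends `d_H`, with a binary operation `•` extending composition of
homeomorphisms and commuting with limits of convergent sequences. -/
theorem statement6 {n : ℕ} (hn : 1 ≤ n)
    (dH : (EuclideanSpace ℝ (Fin n) ≃ₜ EuclideanSpace ℝ (Fin n)) →
          (EuclideanSpace ℝ (Fin n) ≃ₜ EuclideanSpace ℝ (Fin n)) → ℝ)
    (hdH : ∀ h : ℕ → (EuclideanSpace ℝ (Fin n) ≃ₜ EuclideanSpace ℝ (Fin n)),
      Tendsto (fun i => dH (h i) (Homeomorph.refl (EuclideanSpace ℝ (Fin n))))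
        atTop (𝓝 0) →
      ∀ x : EuclideanSpace ℝ (Fin n), Tendsto (fun i => h i x) atTop (𝓝 x))
    (K : Type*) [MetricSpace K] [CompactSpace K]
    (φ : (EuclideanSpace ℝ (Fin n) ≃ₜ EuclideanSpace ℝ (Fin n)) → K)
    (hφ : Function.Injective φ)
    (hext : ∀ f g, dist (φ f) (φ g) = dH f g)
    (op : K → K → K)
    (hop : ∀ f g, op (φ f) (φ g) = φ (g.trans f))
    (hlim : ∀ (ρ σ : ℕ → K) (ρ₀ σ₀ : K), Tendsto ρ atTop (𝓝 ρ₀) →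
      Tendsto σ atTop (𝓝 σ₀) →
      Tendsto (fun i => op (ρ i) (σ i)) atTop (𝓝 (op ρ₀ σ₀))) :
    False :=
  statement6_general hn dH hdH K φ hext op hop hlim
end

section
/- Let H be the set of homeomorphisms of a topological space X, with a metric d_H such that d_H-convergence to id_X implies pointwise convergence to id_X. Suppose there exists h ∈ H such that no sequence of positive iterates (h^{m_r}) converges pointwise to id_X. Then (H, d_H) cannot be isometrically embedded into a compact metric space (K, d_K) carrying a limit-continuous binary operation extending composition on H. -/
open Filter Topology Function

/-
Pass to a subsequence `n_r` along which both `φ (h ^ n_r)` and `φ (h⁻¹ ^ n_r)` converge, to `p`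
and `q`. Since `op (φ (h ^ n_r)) (φ (h⁻¹ ^ n_r)) = φ 1` for every `r`, limit-continuity forces
`op p q = φ 1`; pairing instead `h ^ n_(r+1)` with `h⁻¹ ^ n_r` gives `φ (h ^ (n_(r+1) - n_r)) → φ 1`.
So `d_H (h ^ m_r, id) → 0` for the positive exponents `m_r = n_(r+1) - n_r`, and therefore
`h ^ m_r → id` pointwise.
-/

theorem Homeomorph.coe_pow {X : Type*} [TopologicalSpace X] (f : X ≃ₜ X) (n : ℕ) :
    ⇑(f ^ n) = (⇑f)^[n] := by
  induction n with
  | zero => rfl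
  | succ n ih => rw [pow_succ, iterate_succ, ← ih]; rfl

section LimitContinuousExtension

variable {G K : Type*} [Group G] [TopologicalSpace K] {φ : G → K} {op : K → K → K}

theorem op_eq_one_of_tendsto_inv [T2Space K] (hop : ∀ a b, op (φ a) (φ b) = φ (a * b))
    (hlim : ∀ (ρ σ : ℕ → K) (ρ₀ σ₀ : K), Tendsto ρ atTop (𝓝 ρ₀) →
      Tendsto σ atTop (𝓝 σ₀) → Tendsto (fun i => op (ρ i) (σ i)) atTop (𝓝 (op ρ₀ σ₀)))
    {a : ℕ → G} {p q : K} (hp : Tendsto (fun r => φ (a r)) atTop (𝓝 p))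
    (hq : Tendsto (fun r => φ (a r)⁻¹) atTop (𝓝 q)) :
    op p q = φ 1 := by
  have hconst := hlim _ _ p q hp hq
  simp only [hop, mul_inv_cancel] at hconst
  exact tendsto_nhds_unique hconst tendsto_const_nhds

theorem exists_pos_pow_tendsto_one [T2Space K] [CompactSpace K] [FirstCountableTopology K]
    (hop : ∀ a b, op (φ a) (φ b) = φ (a * b))
    (hlim : ∀ (ρ σ : ℕ → K) (ρ₀ σ₀ : K), Tendsto ρ atTop (𝓝 ρ₀) →
      Tendsto σ atTop (𝓝 σ₀) → Tendsto (fun i => op (ρ i) (σ i)) atTop (𝓝 (op ρ₀ σ₀)))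
    (g : G) :
    ∃ m : ℕ → ℕ, (∀ r, 1 ≤ m r) ∧ Tendsto (fun r => φ (g ^ m r)) atTop (𝓝 (φ 1)) := by
  obtain ⟨⟨p, q⟩, n, hn, hpq⟩ :=
    SeqCompactSpace.tendsto_subseq fun k => (φ (g ^ k), φ (g ^ k)⁻¹)
  have hp : Tendsto (fun r => φ (g ^ n r)) atTop (𝓝 p) := hpq.fst_nhds
  have hq : Tendsto (fun r => φ (g ^ n r)⁻¹) atTop (𝓝 q) := hpq.snd_nhds
  have hstep : ∀ r, op (φ (g ^ n (r + 1))) (φ (g ^ n r)⁻¹) = φ (g ^ (n (r + 1) - n r)) :=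
    fun r => by rw [hop, pow_sub g (hn r.lt_succ_self).le]
  refine ⟨fun r => n (r + 1) - n r, fun r => Nat.sub_pos_of_lt (hn r.lt_succ_self), ?_⟩
  have hlim' := hlim _ _ p q (hp.comp (tendsto_add_atTop_nat 1)) hq
  simpa only [comp_apply, hstep, op_eq_one_of_tendsto_inv hop hlim hp hq] using hlim'

end LimitContinuousExtension

theorem statement12_general {X : Type*} [TopologicalSpace X]
    (dH : (X ≃ₜ X) → (X ≃ₜ X) → ℝ)
    (hdH : ∀ h : ℕ → (X ≃ₜ X),
      Tendsto (fun i => dH (h i) (Homeomorph.refl X)) atTop (𝓝 0) →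
      ∀ x : X, Tendsto (fun i => h i x) atTop (𝓝 x))
    (h : X ≃ₜ X)
    (hh : ∀ m : ℕ → ℕ, (∀ r, 1 ≤ m r) →
      ¬ (∀ x : X, Tendsto (fun r => (⇑h)^[m r] x) atTop (𝓝 x)))
    (K : Type*) [MetricSpace K] [CompactSpace K]
    (φ : (X ≃ₜ X) → K)
    (hext : ∀ f g : X ≃ₜ X, dist (φ f) (φ g) = dH f g)
    (op : K → K → K)
    (hop : ∀ f g : X ≃ₜ X, op (φ f) (φ g) = φ (g.trans f))
    (hlim : ∀ (ρ σ : ℕ → K) (ρ₀ σ₀ : K), Tendsto ρ atTop (𝓝 ρ₀) →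
      Tendsto σ atTop (𝓝 σ₀) →
      Tendsto (fun i => op (ρ i) (σ i)) atTop (𝓝 (op ρ₀ σ₀))) :
    False := by
  obtain ⟨m, hm, hφm⟩ := exists_pos_pow_tendsto_one hop hlim h
  have hdist : Tendsto (fun r => dH (h ^ m r) 1) atTop (𝓝 0) := by
    simpa only [← hext] using tendsto_iff_dist_tendsto_zero.mp hφm
  refine hh m hm fun x => ?_
  simpa only [Homeomorph.coe_pow] using hdH _ hdist x

/-- let `H` be the homeomorphism group of a topological space
`X` with a metric `d_H` such that `d_H`-convergence to the identity implies
pointwise convergence to the identity. If some `h ∈ H` has no sequence of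
positive iterates converging pointwise to the identity, then `(H, d_H)` cannot
be isometrically embedded into a compact metric space `K` carrying a
limit-continuous binary operation extending composition on `H`. -/
theorem statement12 {X : Type*} [TopologicalSpace X]
    (dH : (X ≃ₜ X) → (X ≃ₜ X) → ℝ)
    (hdH : ∀ h : ℕ → (X ≃ₜ X),
      Tendsto (fun i => dH (h i) (Homeomorph.refl X)) atTop (𝓝 0) →
      ∀ x : X, Tendsto (fun i => h i x) atTop (𝓝 x))
    (h : X ≃ₜ X)
    (hh : ∀ m : ℕ → ℕ, (∀ r, 1 ≤ m r) →
      ¬ (∀ x : X, Tendsto (fun r => (⇑h)^[m r] x) atTop (𝓝 x)))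
    (K : Type*) [MetricSpace K] [CompactSpace K]
    (φ : (X ≃ₜ X) → K) (hφ : Function.Injective φ)
    (hext : ∀ f g : X ≃ₜ X, dist (φ f) (φ g) = dH f g)
    (op : K → K → K)
    (hop : ∀ f g : X ≃ₜ X, op (φ f) (φ g) = φ (g.trans f))
    (hlim : ∀ (ρ σ : ℕ → K) (ρ₀ σ₀ : K), Tendsto ρ atTop (𝓝 ρ₀) →
      Tendsto σ atTop (𝓝 σ₀) →
      Tendsto (fun i => op (ρ i) (σ i)) atTop (𝓝 (op ρ₀ σ₀))) :
    False :=
  statement12_general dH hdH h hh K φ hext op hop hlim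
end
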